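/- Sub-Gaussian tail under large κ: if κ(θ) ≥ (1/C)·sqrt(ln(2/β))/sqrt(A''(θ)) for some constant C > 0, then P_{X∼P_θ}( |X − A'(θ)| ≥ (2+C)·sqrt(A''(θ))·sqrt(ln(2/β)) ) ≤ β. -/

import Mathlib

/-!
Chernoff's bound with the tilts `θ ± s`: since `A` is the log-partition function,
`P_θ(±(X - A'(θ)) ≥ R) ≤ exp (A(θ ± s) - A(θ) ∓ s A'(θ) - s R)`. The stability of the variance
gives `A'' ≤ 2 A''(θ)` on `[θ - κ, θ + κ]`, so the exponent is at most `A''(θ) s² - s R`. With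
`R = (2 + C) σ √L`, `σ² = A''(θ)`, `L = ln (2 / β)`, the tilt `s = √L / ((1 + C) σ)` is at most
`κ` and makes this exponent at most `-L`, so each tail has probability at most `β / 2`.
-/

open MeasureTheory Real

theorem ConvexOn.add_mul_sub_le_of_hasDerivAt {S : Set ℝ} {f : ℝ → ℝ} {f' x y : ℝ}
    (hfc : ConvexOn ℝ S f) (hx : x ∈ S) (hy : y ∈ S) (hf : HasDerivAt f f' x) :
    f x + f' * (y - x) ≤ f y := by
  rcases lt_trichotomy x y with hxy | rfl | hyx
  · have := hfc.le_slope_of_hasDerivAt hx hy hxy hf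
    rw [slope_def_field, le_div_iff₀ (sub_pos.2 hxy)] at this
    linarith
  · simp
  · have := hfc.slope_le_of_hasDerivAt hy hx hyx hf
    rw [slope_def_field, div_le_iff₀ (sub_pos.2 hyx)] at this
    linarith

theorem Convex.sub_sub_mul_le_of_deriv2_le {D : Set ℝ} (hD : Convex ℝ D) {f f' f'' : ℝ → ℝ}
    {M a b : ℝ} (hf : ∀ t ∈ D, HasDerivAt f (f' t) t) (hf' : ∀ t ∈ D, HasDerivAt f' (f'' t) t)
    (hM : ∀ t ∈ D, f'' t ≤ M) (ha : a ∈ D) (hb : b ∈ D) :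
    f b - f a - (b - a) * f' a ≤ M / 2 * (b - a) ^ 2 := by
  -- `M/2 (t - a)² - f t` has second derivative `M - f'' ≥ 0`, so it lies above its tangent at `a`.
  have hg : ∀ t ∈ D, HasDerivAt (fun t => M / 2 * (t - a) ^ 2 - f t) (M * (t - a) - f' t) t :=
    fun t ht => by
      refine ((((hasDerivAt_id' t).sub_const a).fun_pow 2).const_mul (M / 2)).fun_sub
        (hf t ht) |>.congr_deriv ?_
      norm_num
      ring
  have hg' : ∀ t ∈ D, HasDerivAt (fun t => M * (t - a) - f' t) (M - f'' t) t := fun t ht => by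
    simpa using (((hasDerivAt_id t).sub_const a).const_mul M).fun_sub (hf' t ht)
  have hconv : ConvexOn ℝ D (fun t => M / 2 * (t - a) ^ 2 - f t) :=
    convexOn_of_hasDerivWithinAt2_nonneg hD
      (fun t ht => (hg t ht).continuousAt.continuousWithinAt)
      (fun t ht => (hg t (interior_subset ht)).hasDerivWithinAt)
      (fun t ht => (hg' t (interior_subset ht)).hasDerivWithinAt)
      (fun t ht => sub_nonneg.2 (hM t (interior_subset ht)))
  have := hconv.add_mul_sub_le_of_hasDerivAt ha hb (hg a ha)
  simp only [sub_self] at this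
  linarith

theorem setIntegral_exp_mul_sub_le {μ : Measure ℝ} {S : Set ℝ} {θ s a c : ℝ}
    (hS : MeasurableSet S) (hSa : ∀ x ∈ S, s * a ≤ s * x)
    (hint : Integrable (fun x => exp ((θ + s) * x)) μ) :
    ∫ x in S, exp (θ * x - c) ∂μ ≤ exp (log (∫ x, exp ((θ + s) * x) ∂μ) - c - s * a) := by
  calc ∫ x in S, exp (θ * x - c) ∂μ
      ≤ ∫ x in S, exp (-c - s * a) * exp ((θ + s) * x) ∂μ := by
        refine integral_mono_of_nonneg (.of_forall fun x => (exp_pos _).le)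
          (hint.const_mul _).integrableOn ?_
        filter_upwards [ae_restrict_of_forall_mem hS hSa] with x hx
        rw [← exp_add, exp_le_exp]
        linarith
    _ ≤ ∫ x, exp (-c - s * a) * exp ((θ + s) * x) ∂μ :=
        setIntegral_le_integral (hint.const_mul _) (.of_forall fun x => by positivity)
    _ = exp (-c - s * a) * ∫ x, exp ((θ + s) * x) ∂μ := integral_const_mul _ _
    _ ≤ exp (-c - s * a) * exp (log (∫ x, exp ((θ + s) * x) ∂μ)) := by
        gcongr
        exact le_exp_log _
    _ = exp (log (∫ x, exp ((θ + s) * x) ∂μ) - c - s * a) := by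
        rw [← exp_add]
        ring_nf

theorem setIntegral_le_abs_sub_eq_add {μ : Measure ℝ} {f : ℝ → ℝ} {m R : ℝ} (hR : 0 < R)
    (hf : Integrable f μ) :
    ∫ x in {x | R ≤ |x - m|}, f x ∂μ =
      ∫ x in Set.Ici (m + R), f x ∂μ + ∫ x in Set.Iic (m - R), f x ∂μ := by
  have hset : {x | R ≤ |x - m|} = Set.Ici (m + R) ∪ Set.Iic (m - R) := by
    ext x
    simp only [Set.mem_union, Set.mem_Ici, Set.mem_Iic, le_abs]
    constructor <;> rintro (h | h) <;> [left; right; left; right] <;> linarith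
  have hdisj : Disjoint (Set.Ici (m + R)) (Set.Iic (m - R)) :=
    Set.disjoint_left.2 fun x h₁ h₂ => by
      simp only [Set.mem_Ici, Set.mem_Iic] at h₁ h₂
      linarith
  rw [hset, setIntegral_union hdisj measurableSet_Iic hf.integrableOn hf.integrableOn]

theorem setIntegral_le_abs_sub_le_of_cumulant_le {μ : Measure ℝ} {A : ℝ → ℝ} {θ m s R K : ℝ}
    (hs : 0 ≤ s) (hR : 0 < R)
    (hA : ∀ ε, |ε| = s → A (θ + ε) = log (∫ x, exp ((θ + ε) * x) ∂μ))
    (hint : ∀ ε, |ε| = s → Integrable (fun x => exp ((θ + ε) * x)) μ)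
    (hint₀ : Integrable (fun x => exp (θ * x)) μ)
    (hK : ∀ ε, |ε| = s → A (θ + ε) - A θ - ε * m ≤ K) :
    ∫ x in {x | R ≤ |x - m|}, exp (θ * x - A θ) ∂μ ≤ 2 * exp (K - s * R) := by
  rw [setIntegral_le_abs_sub_eq_add hR (by simpa [exp_sub] using hint₀.div_const (exp (A θ)))]
  have hpos : |s| = s := abs_of_nonneg hs
  have hneg : |-s| = s := by rwa [abs_neg]
  have hright : ∫ x in Set.Ici (m + R), exp (θ * x - A θ) ∂μ ≤ exp (K - s * R) := calc
    _ ≤ exp (A (θ + s) - A θ - s * (m + R)) := hA s hpos ▸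
        setIntegral_exp_mul_sub_le measurableSet_Ici
          (fun x hx => mul_le_mul_of_nonneg_left hx hs) (hint s hpos)
    _ ≤ exp (K - s * R) := exp_le_exp.2 (by linarith [hK s hpos])
  have hleft : ∫ x in Set.Iic (m - R), exp (θ * x - A θ) ∂μ ≤ exp (K - s * R) := calc
    _ ≤ exp (A (θ + -s) - A θ - -s * (m - R)) := hA (-s) hneg ▸
        setIntegral_exp_mul_sub_le measurableSet_Iic
          (fun x hx => mul_le_mul_of_nonpos_left hx (neg_nonpos.2 hs)) (hint (-s) hneg)
    _ ≤ exp (K - s * R) := exp_le_exp.2 (by linarith [hK (-s) hneg])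
  linarith

theorem sq_mul_sq_sub_mul_le_neg_sq {σ r C s : ℝ} (hC : 0 ≤ C) (hr : r = s * ((1 + C) * σ)) :
    σ ^ 2 * s ^ 2 - s * ((2 + C) * σ * r) ≤ -r ^ 2 := by
  subst hr
  nlinarith [mul_nonneg hC (sq_nonneg (s * σ))]

/-- Sub-Gaussian tail under large `κ`: if `κ(θ) ≥ (1/C)·√(ln(2/β))/√(A''(θ))` for some
constant `C > 0`, then `P_{X∼P_θ}(|X − A'(θ)| ≥ (2+C)·√(A''(θ))·√(ln(2/β))) ≤ β`. -/
theorem subgaussian_tail_exponential_family (μ : Measure ℝ) (A A' A'' : ℝ → ℝ)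
    (θ κ β C : ℝ)
    (hβ : β ∈ Set.Ioc (0 : ℝ) 1) (hκ : 0 < κ) (hC : 0 < C)
    (hA : ∀ t ∈ Set.Icc (θ - κ) (θ + κ), A t = Real.log (∫ x, Real.exp (t * x) ∂μ))
    (hΦ : ∀ t ∈ Set.Icc (θ - κ) (θ + κ), Integrable (fun x => Real.exp (t * x)) μ)
    (hA' : ∀ t ∈ Set.Icc (θ - κ) (θ + κ), HasDerivAt A (A' t) t)
    (hA'' : ∀ t ∈ Set.Icc (θ - κ) (θ + κ), HasDerivAt A' (A'' t) t)
    (hstab : ∀ t ∈ Set.Icc (θ - κ) (θ + κ),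
        0 < A'' t ∧ A'' θ / A'' t ∈ Set.Icc (1 / 2 : ℝ) 2)
    (hκC : (1 / C) * Real.sqrt (Real.log (2 / β)) / Real.sqrt (A'' θ) ≤ κ) :
    ∫ x in {x : ℝ |
        (2 + C) * Real.sqrt (A'' θ) * Real.sqrt (Real.log (2 / β)) ≤ |x - A' θ|},
      Real.exp (θ * x - A θ) ∂μ ≤ β := by
  obtain ⟨hβ0, hβ1⟩ := hβ
  set L := log (2 / β)
  set σ := √(A'' θ)
  have hL : 0 < L := log_pos (by rw [lt_div_iff₀ hβ0]; linarith)
  have hθ : θ ∈ Set.Icc (θ - κ) (θ + κ) := ⟨by linarith, by linarith⟩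
  have hσ : 0 < σ := sqrt_pos.2 (hstab θ hθ).1
  set s := √L / ((1 + C) * σ)
  have hs : 0 ≤ s := by positivity
  have hsκ : s ≤ κ := calc
    s ≤ √L / (C * σ) := div_le_div_of_nonneg_left (sqrt_nonneg _) (by positivity) (by nlinarith)
    _ = 1 / C * √L / σ := by field_simp
    _ ≤ κ := hκC
  have hmem : ∀ ε, |ε| = s → θ + ε ∈ Set.Icc (θ - κ) (θ + κ) := fun ε hε => by
    constructor <;> linarith [abs_le.1 (hε.trans_le hsκ)]
  have hA''_le : ∀ t ∈ Set.Icc (θ - κ) (θ + κ), A'' t ≤ 2 * A'' θ := fun t ht => by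
    have h := (hstab t ht).2.1
    rw [le_div_iff₀ (hstab t ht).1] at h
    linarith
  have hK : ∀ ε, |ε| = s → A (θ + ε) - A θ - ε * A' θ ≤ A'' θ * s ^ 2 := fun ε hε => by
    have := (convex_Icc _ _).sub_sub_mul_le_of_deriv2_le hA' hA'' hA''_le hθ (hmem ε hε)
    rw [add_sub_cancel_left, ← sq_abs, hε] at this
    linarith
  have hexponent : A'' θ * s ^ 2 - s * ((2 + C) * σ * √L) ≤ -L := by
    have hr : √L = s * ((1 + C) * σ) := by simp only [s]; field_simp
    have := sq_mul_sq_sub_mul_le_neg_sq hC.le hr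
    rwa [sq_sqrt (hstab θ hθ).1.le, sq_sqrt hL.le] at this
  calc _ ≤ 2 * exp (A'' θ * s ^ 2 - s * ((2 + C) * σ * √L)) :=
        setIntegral_le_abs_sub_le_of_cumulant_le hs (by positivity) (fun ε hε => hA _ (hmem ε hε))
          (fun ε hε => hΦ _ (hmem ε hε)) (hΦ θ hθ) hK
    _ ≤ 2 * exp (-L) := by gcongr
    _ = β := by rw [exp_neg, exp_log (by positivity), inv_div]; ring
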